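/- Let G be a countable discrete abelian group acting on H = L²(E, λ|_E) and on K = L²(F, λ|_F) by multiplication by characters, where E, F ⊆ Ĝ are measurable. Let v ∈ H and w ∈ K be frame vectors for the respective representations, with analysis operators Θ_v : H → ℓ²(G) and Θ_w : K → ℓ²(G). Then the ranges of Θ_v and Θ_w are orthogonal subspaces of ℓ²(G) if and only if λ(E ∩ F) = 0. -/

import Mathlib

open MeasureTheory ComplexConjugate
open scoped ENNReal

/-! The analysis coefficient `⟨h, π(g) v⟩ = ∫ (h v̄) χ̄_g` is the `g`-th Fourier coefficient of
`h v̄`, which lies in `L²` because a frame vector is essentially bounded. Since the characters form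
a Hilbert basis of `L²`, Parseval turns `⟨Θ_v h, Θ_w k⟩_{ℓ²}` into `∫ h v̄ k̄ w`. If `E ∩ F` is null
this vanishes because `h` lives on `E` and `k` on `F`; conversely, for `h = v`, `k = w` it is
`∫ |v w|²`, and the lower frame bounds make `v w` nonzero on `E ∩ F`. -/

section Parseval

variable {G X : Type*} [MeasurableSpace X] {μ : Measure X}

lemma inner_toLp_eq_integral {f₁ f₂ : X → ℂ} (h₁ : MemLp f₁ 2 μ) (h₂ : MemLp f₂ 2 μ) :
    inner ℂ (h₁.toLp f₁) (h₂.toLp f₂) = ∫ t, f₂ t * conj (f₁ t) ∂μ := by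
  rw [L2.inner_def]
  refine integral_congr_ae ?_
  filter_upwards [h₁.coeFn_toLp, h₂.coeFn_toLp] with t ht₁ ht₂
  simp [RCLike.inner_apply, ht₁, ht₂]

def IntegralOrthonormal [DecidableEq G] (μ : Measure X) (χ : G → X → ℂ) : Prop :=
  ∀ g g', ∫ x, χ g x * conj (χ g' x) ∂μ = if g = g' then 1 else 0

def IntegralComplete (μ : Measure X) (χ : G → X → ℂ) : Prop :=
  ∀ f : X → ℂ, MemLp f 2 μ → (∀ g, ∫ x, f x * conj (χ g x) ∂μ = 0) → f =ᵐ[μ] 0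

variable {χ : G → X → ℂ}

lemma orthonormal_toLp [DecidableEq G] (hχ : ∀ g, MemLp (χ g) 2 μ)
    (horth : IntegralOrthonormal μ χ) :
    Orthonormal ℂ fun g => (hχ g).toLp (χ g) := by
  rw [orthonormal_iff_ite]
  intro g g'
  rw [inner_toLp_eq_integral, horth g' g]
  simp [eq_comm]

lemma orthogonal_span_range_toLp_eq_bot (hχ : ∀ g, MemLp (χ g) 2 μ)
    (hcomp : IntegralComplete μ χ) :
    (Submodule.span ℂ (Set.range fun g => (hχ g).toLp (χ g)))ᗮ = ⊥ := by
  rw [Submodule.eq_bot_iff]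
  intro f hf
  have hcoeff (g : G) : ∫ t, f t * conj (χ g t) ∂μ = 0 := by
    rw [← inner_toLp_eq_integral (hχ g) (Lp.memLp f), Lp.toLp_coeFn]
    exact Submodule.inner_right_of_mem_orthogonal (Submodule.subset_span (Set.mem_range_self g)) hf
  exact Lp.eq_zero_iff_ae_eq_zero.mpr (hcomp f (Lp.memLp f) hcoeff)

noncomputable def hilbertBasisOfComplete [DecidableEq G] (hχ : ∀ g, MemLp (χ g) 2 μ)
    (horth : IntegralOrthonormal μ χ)
    (hcomp : IntegralComplete μ χ) :
    HilbertBasis G ℂ (Lp ℂ 2 μ) :=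
  .mkOfOrthogonalEqBot (orthonormal_toLp hχ horth) (orthogonal_span_range_toLp_eq_bot hχ hcomp)

theorem tsum_integral_mul_conj_eq_integral_mul_conj [DecidableEq G] (hχ : ∀ g, MemLp (χ g) 2 μ)
    (horth : IntegralOrthonormal μ χ)
    (hcomp : IntegralComplete μ χ)
    {f₁ f₂ : X → ℂ} (h₁ : MemLp f₁ 2 μ) (h₂ : MemLp f₂ 2 μ) :
    ∑' g, (∫ t, f₁ t * conj (χ g t) ∂μ) * conj (∫ t, f₂ t * conj (χ g t) ∂μ)
      = ∫ t, f₁ t * conj (f₂ t) ∂μ := by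
  have hb : ⇑(hilbertBasisOfComplete hχ horth hcomp) = fun g => (hχ g).toLp (χ g) :=
    HilbertBasis.coe_mkOfOrthogonalEqBot _ _
  rw [← inner_toLp_eq_integral h₂ h₁,
    ← (hilbertBasisOfComplete hχ horth hcomp).tsum_inner_mul_inner, hb]
  refine tsum_congr fun g => ?_
  rw [← inner_conj_symm, inner_toLp_eq_integral, inner_toLp_eq_integral, mul_comm]

theorem tsum_analysis_mul_conj_analysis [DecidableEq G] (hχ : ∀ g, MemLp (χ g) 2 μ)
    (horth : IntegralOrthonormal μ χ) (hcomp : IntegralComplete μ χ)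
    {v w h k : X → ℂ} (hv : MemLp v ∞ μ) (hw : MemLp w ∞ μ) (hh : MemLp h 2 μ)
    (hk : MemLp k 2 μ) :
    ∑' g, (∫ t, h t * conj (χ g t * v t) ∂μ) * conj (∫ t, k t * conj (χ g t * w t) ∂μ)
      = ∫ t, h t * conj (v t) * conj (k t * conj (w t)) ∂μ := by
  have hhv : MemLp (fun t => conj (v t) * h t) 2 μ := hh.mul' hv.star
  have hkw : MemLp (fun t => conj (w t) * k t) 2 μ := hk.mul' hw.star
  have hcoeff (u f : X → ℂ) (g : G) :
      ∫ t, f t * conj (χ g t * u t) ∂μ = ∫ t, conj (u t) * f t * conj (χ g t) ∂μ := by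
    congr 1; ext t; rw [map_mul]; ring
  simp only [hcoeff, tsum_integral_mul_conj_eq_integral_mul_conj hχ horth hcomp hhv hkw]
  congr 1; ext t; rw [mul_comm (conj (w t))]; ring

end Parseval

section FrameVector

variable {X : Type*} [MeasurableSpace X] {μ : Measure X}

/-- No measurability of `E` is needed, since `μ (s ∩ E) ≤ μ.restrict E s` for every `s`. -/
lemma ae_of_ae_restrict_of_ae_notMem {p : X → Prop} {E : Set X}
    (hE : ∀ᵐ t ∂μ.restrict E, p t) (hEc : ∀ᵐ t ∂μ, t ∉ E → p t) : ∀ᵐ t ∂μ, p t := by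
  rw [ae_iff] at hE hEc ⊢
  have hinter : μ ({t | ¬p t} ∩ E) = 0 :=
    le_antisymm ((Measure.le_restrict_apply _ _).trans hE.le) bot_le
  refine measure_mono_null (fun t ht => ?_) (measure_union_null hinter hEc)
  by_cases htE : t ∈ E
  exacts [Or.inl ⟨ht, htE⟩, Or.inr fun h => ht (h htE)]

lemma memLp_top_of_ae_restrict_norm_sq_le {F : Type*} [NormedAddCommGroup F] {v : X → F}
    {E : Set X} {C : ℝ} (hv : AEStronglyMeasurable v μ) (hsupp : ∀ᵐ t ∂μ, t ∉ E → v t = 0)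
    (hbound : ∀ᵐ t ∂μ.restrict E, ‖v t‖ ^ 2 ≤ C) : MemLp v ∞ μ :=
  memLp_top_of_bound hv √C <| ae_of_ae_restrict_of_ae_notMem
    (hbound.mono fun t ht => by simpa using Real.abs_le_sqrt ht)
    (hsupp.mono fun t ht htE => by simp [ht htE])

lemma ae_eq_zero_of_integral_norm_sq_eq_zero {f : X → ℂ} (hf : MemLp f 2 μ)
    (h : ∫ t, ((‖f t‖ ^ 2 : ℝ) : ℂ) ∂μ = 0) : f =ᵐ[μ] 0 := by
  rw [integral_complex_ofReal, Complex.ofReal_eq_zero, integral_eq_zero_iff_of_nonneg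
    (fun t => by positivity) ((memLp_two_iff_integrable_sq_norm hf.1).mp hf)] at h
  filter_upwards [h] with t ht
  simpa using ht

lemma measure_inter_eq_zero_of_mul_ae_eq_zero {R : Type*} [NormedRing R] [NoZeroDivisors R]
    {v w : X → R} {E F : Set X} {C D : ℝ} (hC : 0 < C) (hD : 0 < D)
    (hv : ∀ᵐ t ∂μ.restrict E, C ≤ ‖v t‖ ^ 2) (hw : ∀ᵐ t ∂μ.restrict F, D ≤ ‖w t‖ ^ 2)
    (hvw : (fun t => v t * w t) =ᵐ[μ] 0) : μ (E ∩ F) = 0 := by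
  rw [← Measure.restrict_eq_zero, ← ae_eq_bot, ← Filter.eventually_false_iff_eq_bot]
  filter_upwards [ae_restrict_of_ae hvw,
    ae_restrict_of_ae_restrict_of_subset Set.inter_subset_left hv,
    ae_restrict_of_ae_restrict_of_subset Set.inter_subset_right hw] with t hvw hvt hwt
  rcases mul_eq_zero.mp hvw with h | h
  · simp only [h, norm_zero] at hvt
    linarith
  · simp only [h, norm_zero] at hwt
    linarith

end FrameVector

theorem stmt2 {G X : Type*} [DecidableEq G] [MeasurableSpace X]
    (μ : Measure X) [IsProbabilityMeasure μ]
    (χ : G → X → ℂ)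
    (hmeas : ∀ g, Measurable (χ g))
    (hunit : ∀ g x, ‖χ g x‖ = 1)
    (horth : ∀ g g' : G, ∫ x, χ g x * conj (χ g' x) ∂μ = if g = g' then (1 : ℂ) else 0)
    (hcomp : ∀ f : X → ℂ, MemLp f 2 μ →
      (∀ g : G, ∫ x, f x * conj (χ g x) ∂μ = 0) → f =ᵐ[μ] 0)
    (E F : Set X)
    (v w : X → ℂ) (hv : MemLp v 2 μ) (hw : MemLp w 2 μ)
    (hvsupp : ∀ᵐ t ∂μ, t ∉ E → v t = 0) (hwsupp : ∀ᵐ t ∂μ, t ∉ F → w t = 0)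
    -- v and w are frame vectors: |v|², |w|² bounded above and below a.e. on E, F
    (hvframe : ∃ C₁ C₂ : ℝ, 0 < C₁ ∧ C₁ ≤ C₂ ∧
      ∀ᵐ t ∂(μ.restrict E), C₁ ≤ ‖v t‖ ^ 2 ∧ ‖v t‖ ^ 2 ≤ C₂)
    (hwframe : ∃ C₁ C₂ : ℝ, 0 < C₁ ∧ C₁ ≤ C₂ ∧
      ∀ᵐ t ∂(μ.restrict F), C₁ ≤ ‖w t‖ ^ 2 ∧ ‖w t‖ ^ 2 ≤ C₂) :
    (∀ a ∈ {a : G → ℂ | ∃ h : X → ℂ, MemLp h 2 μ ∧ (∀ᵐ t ∂μ, t ∉ E → h t = 0) ∧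
        a = fun g => ∫ t, h t * conj (χ g t * v t) ∂μ},
     ∀ b ∈ {b : G → ℂ | ∃ h : X → ℂ, MemLp h 2 μ ∧ (∀ᵐ t ∂μ, t ∉ F → h t = 0) ∧
        b = fun g => ∫ t, h t * conj (χ g t * w t) ∂μ},
      ∑' g : G, a g * conj (b g) = 0)
    ↔ μ (E ∩ F) = 0 := by
  obtain ⟨C₁, C₂, hC₁, -, hvbound⟩ := hvframe
  obtain ⟨D₁, D₂, hD₁, -, hwbound⟩ := hwframe
  have hχ (g : G) : MemLp (χ g) 2 μ :=
    .of_bound (hmeas g).aestronglyMeasurable 1 (.of_forall fun x => (hunit g x).le)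
  have hvbdd := memLp_top_of_ae_restrict_norm_sq_le hv.1 hvsupp (hvbound.mono fun _ => And.right)
  have hwbdd := memLp_top_of_ae_restrict_norm_sq_le hw.1 hwsupp (hwbound.mono fun _ => And.right)
  have parseval {h k : X → ℂ} (hh : MemLp h 2 μ) (hk : MemLp k 2 μ) :=
    tsum_analysis_mul_conj_analysis hχ horth hcomp hvbdd hwbdd hh hk
  constructor
  · intro hperp
    have h0 := hperp _ ⟨v, hv, hvsupp, rfl⟩ _ ⟨w, hw, hwsupp, rfl⟩
    rw [parseval hv hw] at h0
    refine measure_inter_eq_zero_of_mul_ae_eq_zero hC₁ hD₁ (hvbound.mono fun _ => And.left)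
      (hwbound.mono fun _ => And.left) (ae_eq_zero_of_integral_norm_sq_eq_zero (hw.mul' hvbdd) ?_)
    rw [← h0]
    congr 1; ext t
    simp only [Complex.mul_conj', norm_mul, mul_pow, map_pow, Complex.conj_ofReal]
    push_cast
    ring
  · rintro hnull _ ⟨h, hh, hhE, rfl⟩ _ ⟨k, hk, hkF, rfl⟩
    rw [parseval hh hk]
    refine integral_eq_zero_of_ae ?_
    filter_upwards [hhE, hkF, measure_eq_zero_iff_ae_notMem.mp hnull] with t htE htF htEF
    by_cases ht : t ∈ E
    · simp [htF fun htF => htEF ⟨ht, htF⟩]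
    · simp [htE ht]
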